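/- For a zigzag module M : ZZ → vec and (a,b) ∈ ℤ^op × ℤ, the block extension satisfies E(M)(a,b) = colim M|_{[a,b]} if a ≤ b, and E(M)(a,b) = lim M|_{[b,a]} if a > b, with structure maps given by the universal properties of limits and colimits. -/

import Mathlib

open CategoryTheory Limits

variable (K : Type) [Field K] {P : Type} [PartialOrder P]

/-- Zigzag-connectedness of a subset of a poset. -/
def ConnectedIn (I : Set P) : Prop :=
  ∀ p ∈ I, ∀ q ∈ I, Relation.ReflTransGen (fun a b => a ∈ I ∧ b ∈ I ∧ (a ≤ b ∨ b ≤ a)) p q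

/-- Convexity of a subset of a poset. -/
def ConvexIn (I : Set P) : Prop :=
  ∀ ⦃p q r : P⦄, p ∈ I → r ∈ I → p ≤ q → q ≤ r → q ∈ I

/-- An interval of a poset: nonempty, convex and connected. -/
def IsIntervalSet (I : Set P) : Prop :=
  I.Nonempty ∧ ConvexIn I ∧ ConnectedIn I

/-- Restriction of a persistence module to a subset of the indexing poset. -/
def restrict (M : P ⥤ ModuleCat.{0} K) (I : Set P) : I ⥤ ModuleCat.{0} K :=
  (Monotone.functor (f := (Subtype.val : I → P)) (fun _ _ h => h)) ⋙ M

/-- The canonical limit-to-colimit map `i_p ∘ π_p` of the restriction of `M` to `I`. -/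
noncomputable def canMap (M : P ⥤ ModuleCat.{0} K) (I : Set P) (p : P) (hp : p ∈ I) :
    limit (restrict K M I) ⟶ colimit (restrict K M I) :=
  limit.π (restrict K M I) ⟨p, hp⟩ ≫ colimit.ι (restrict K M I) ⟨p, hp⟩

open Classical in
/-- The generalized rank of `M` over `I` (for `I` an interval, independent of basepoint). -/
noncomputable def genRank (M : P ⥤ ModuleCat.{0} K) (I : Set P) : Cardinal :=
  if h : I.Nonempty then LinearMap.rank (canMap K M I h.choose h.choose_spec).hom else 0


/-- A lower fence of (the subposet) `I`. -/
def IsLowerFenceOf (I L : Set P) : Prop :=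
  L ⊆ I ∧ ConnectedIn L ∧ ∀ q ∈ I, (L ∩ {r | r ≤ q}).Nonempty ∧ ConnectedIn (L ∩ {r | r ≤ q})

/-- An upper fence of (the subposet) `I`. -/
def IsUpperFenceOf (I U : Set P) : Prop :=
  U ⊆ I ∧ ConnectedIn U ∧ ∀ q ∈ I, (U ∩ {r | q ≤ r}).Nonempty ∧ ConnectedIn (U ∩ {r | q ≤ r})

/-- The space of sections of a persistence module: compatible tuples. -/
def sectionsSubmodule (M : P ⥤ ModuleCat.{0} K) : Submodule K (∀ p, M.obj p) where
  carrier := {v | ∀ (p q : P) (h : p ≤ q), M.map h.hom (v p) = v q}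
  add_mem' := by intro a b ha hb p q h; simp [map_add, ha p q h, hb p q h]
  zero_mem' := by intro p q h; simp
  smul_mem' := by intro c a ha p q h; simp [map_smul, ha p q h]

open Classical in
/-- `⊤` if `b` holds, `⊥` otherwise; underlying space of an interval module at a point. -/
noncomputable def condSub (b : Prop) : Submodule K K := if b then ⊤ else ⊥

open Classical in
/-- The structure map of an interval module. -/
noncomputable def condMap (b c : Prop) : condSub K b →ₗ[K] condSub K c where
  toFun x := ⟨if b ∧ c then (x : K) else 0, by
    by_cases hc : c
    · simp [condSub, hc]
    · rw [if_neg (fun h => hc h.2)]; exact Submodule.zero_mem _⟩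
  map_add' x y := by ext; split_ifs <;> simp
  map_smul' r x := by ext; split_ifs <;> simp

lemma condMap_id (b : Prop) : condMap K b b = LinearMap.id := by
  classical
  ext x
  by_cases hb : b
  · simp [condMap, hb]
  · have hx : (x : K) = 0 := by
      have h3 : condSub K b = ⊥ := if_neg hb
      have h2 : (x : K) ∈ (⊥ : Submodule K K) := by rw [← h3]; exact x.2
      exact (Submodule.mem_bot K).mp h2
    simp [condMap, hb, hx]

lemma condMap_comp (b c d : Prop) (h : b → d → c) :
    (condMap K c d).comp (condMap K b c) = condMap K b d := by
  classical
  ext x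
  by_cases hb : b <;> by_cases hc : c <;> by_cases hd : d <;>
    simp [condMap, hb, hc, hd]
  exact absurd (h hb hd) hc

/-- The interval module supported on a convex set `S`. -/
noncomputable def IM (S : Set P) (hS : ConvexIn S) : P ⥤ ModuleCat.{0} K where
  obj p := ModuleCat.of K (condSub K (p ∈ S))
  map {p q} h := ModuleCat.ofHom (condMap K (p ∈ S) (q ∈ S))
  map_id p := by
    rw [condMap_id]
    rfl
  map_comp {p q r} h h' := by
    rw [← condMap_comp K (p ∈ S) (q ∈ S) (r ∈ S) (fun hp hr => hS hp hr h.le h'.le)]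
    rfl

open OrderDual

/-- The zigzag relation on `ℤ`: even integers are sinks, odd integers are sources. -/
def zzle (a b : ℤ) : Prop := a = b ∨ ((b = a + 1 ∨ b = a - 1) ∧ b % 2 = 0)

lemma zzle_refl (a : ℤ) : zzle a a := Or.inl rfl
lemma zzle_trans (a b c : ℤ) : zzle a b → zzle b c → zzle a c := by unfold zzle; omega
lemma zzle_antisymm (a b : ℤ) : zzle a b → zzle b a → a = b := by unfold zzle; omega
lemma zzle_sandwich (a b c : ℤ) : zzle a b → zzle b c → a = b ∨ b = c := by unfold zzle; omega

/-- The zigzag poset: `ℤ` equipped with the zigzag partial order. -/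
def ZZ : Type := ℤ

instance : PartialOrder ZZ where
  le := zzle
  le_refl := zzle_refl
  le_trans := zzle_trans
  le_antisymm := zzle_antisymm

/-- The identity map `ZZ → ℤ`. -/
def zint (a : ZZ) : ℤ := a

lemma zz_le_iff (a b : ZZ) : a ≤ b ↔ zzle (zint a) (zint b) := Iff.rfl

/-- Any subset of the zigzag poset is convex. -/
lemma zz_convex (S : Set ZZ) : ConvexIn S := by
  intro p q r hp hr hpq hqr
  rcases zzle_sandwich (zint p) (zint q) (zint r) hpq hqr with h | h
  · have : p = q := h
    exact this ▸ hp
  · have : q = r := h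
    exact this ▸ hr

/-- The poset `ℤᵒᵈ × ℤ` (as a one-instance type synonym). -/
def OPZ : Type := ℤᵒᵈ × ℤ

instance : PartialOrder OPZ := inferInstanceAs (PartialOrder (ℤᵒᵈ × ℤ))

/-- Build a point of `ℤᵒᵈ × ℤ`. -/
def mkOP (a b : ℤ) : OPZ := (toDual a, b)

/-- First coordinate of a point of `ℤᵒᵈ × ℤ`, as an integer. -/
def opFst (p : OPZ) : ℤ := ofDual (show ℤᵒᵈ × ℤ from p).1
/-- Second coordinate of a point of `ℤᵒᵈ × ℤ`. -/
def opSnd (p : OPZ) : ℤ := (show ℤᵒᵈ × ℤ from p).2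

lemma opFst_mk (a b : ℤ) : opFst (mkOP a b) = a := rfl
lemma opSnd_mk (a b : ℤ) : opSnd (mkOP a b) = b := rfl

lemma opz_le_iff (p q : OPZ) : p ≤ q ↔ opFst q ≤ opFst p ∧ opSnd p ≤ opSnd q := Iff.rfl

lemma opz_ext (p q : OPZ) (h1 : opFst p = opFst q) (h2 : opSnd p = opSnd q) : p = q := by
  refine le_antisymm ?_ ?_ <;> rw [opz_le_iff] <;> omega

/-- The inclusion of the zigzag poset into `ℤᵒᵈ × ℤ`: sinks `i ↦ (i,i)`,
sources `j ↦ (j+1, j-1)`. -/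
def iotaFun (i : ZZ) : OPZ :=
  if zint i % 2 = 0 then mkOP (zint i) (zint i) else mkOP (zint i + 1) (zint i - 1)

lemma iotaFun_mono : Monotone iotaFun := by
  intro a b h
  rw [zz_le_iff] at h
  rcases h with h' | h'
  · have : a = b := h'
    exact this ▸ le_refl _
  · rw [opz_le_iff]
    unfold iotaFun
    split_ifs <;> simp only [opFst_mk, opSnd_mk] <;> omega

/-- The inclusion functor `ZZ ⥤ ℤᵒᵈ × ℤ`. -/
def iotaF : ZZ ⥤ OPZ := iotaFun_mono.functor

/-- The subposet `U = {(i,j) : i ≤ j}` of `ℤᵒᵈ × ℤ`. -/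
def Useg : Set OPZ := {p | opFst p ≤ opSnd p}

/-- The inclusion functor `U ⥤ ℤᵒᵈ × ℤ`. -/
def kappaF : Useg ⥤ OPZ :=
  Monotone.functor (f := (Subtype.val : Useg → OPZ)) (fun _ _ h => h)

/-- The block extension functor on objects: `E = Ran_κ ∘ (-)|_U ∘ Lan_ι`. -/
noncomputable def blockExt (K : Type) [Field K] (M : ZZ ⥤ ModuleCat.{0} K) :
    OPZ ⥤ ModuleCat.{0} K :=
  kappaF.ran.obj (kappaF ⋙ iotaF.lan.obj M)

/-- The segment `[a,b] ⊆ ZZ` of zigzag indices between `a` and `b`. -/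
def zseg (a b : ℤ) : Set ZZ := {i | a ≤ zint i ∧ zint i ≤ b}

section BlockExtAux

open Relation

/-- Hom-sets in a structured arrow category over a thin domain are subsingletons. -/
instance structuredArrowHomSubsingleton {γ : Type} [Preorder γ] {D : Type} [Category.{0} D]
    {F : γ ⥤ D} {x : D} (A B : StructuredArrow x F) : Subsingleton (A ⟶ B) :=
  ⟨fun f g => StructuredArrow.hom_ext f g (Subsingleton.elim _ _)⟩

/-- Hom-sets in a costructured arrow category over a thin domain are subsingletons. -/
instance costructuredArrowHomSubsingleton {γ : Type} [Preorder γ] {D : Type} [Category.{0} D]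
    {F : γ ⥤ D} {x : D} (A B : CostructuredArrow F x) : Subsingleton (A ⟶ B) :=
  ⟨fun f g => CostructuredArrow.hom_ext f g (Subsingleton.elim _ _)⟩

theorem zigzag_of_chain {α : Type} [PartialOrder α] {J : Type} [Category.{0} J] {S : Set α}
    (obj : ∀ u ∈ S, J)
    (hzag : ∀ p hp q hq, (p ≤ q ∨ q ≤ p) → Zag (obj p hp) (obj q hq)) :
    ∀ {p q : α}, Relation.ReflTransGen (fun a b => a ∈ S ∧ b ∈ S ∧ (a ≤ b ∨ b ≤ a)) p q →
      ∀ (hp : p ∈ S) (hq : q ∈ S), Zigzag (obj p hp) (obj q hq) := by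
  intro p q h
  induction h with
  | refl => intro hp hq; exact Relation.ReflTransGen.refl
  | tail h1 h2 ih => intro hp hq; exact (ih hp h2.1).tail (hzag _ _ _ _ h2.2.2)

theorem isConnected_of_set {α : Type} [PartialOrder α] {J : Type} [Category.{0} J] (S : Set α)
    (hconn : ConnectedIn S)
    (pt : J → α) (hpt : ∀ j, pt j ∈ S)
    (obj : ∀ u ∈ S, J)
    (hobj : ∀ j, Zag j (obj (pt j) (hpt j)))
    (hzag : ∀ p hp q hq, (p ≤ q ∨ q ≤ p) → Zag (obj p hp) (obj q hq))
    (hne : Nonempty J) : IsConnected J := by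
  haveI := hne
  apply zigzag_isConnected
  intro j₁ j₂
  exact Relation.ReflTransGen.trans (Relation.ReflTransGen.single (hobj j₁))
    (Relation.ReflTransGen.trans
      (zigzag_of_chain obj hzag (hconn _ (hpt j₁) _ (hpt j₂)) (hpt j₁) (hpt j₂))
      (Relation.ReflTransGen.single (hobj j₂).symm))

lemma zint_id (k : ZZ) : zint k = k := rfl

lemma zz_le_iff' (p q : ZZ) : p ≤ q ↔
    (zint p = zint q ∨ ((zint q = zint p + 1 ∨ zint q = zint p - 1) ∧ zint q % 2 = 0)) :=
  zz_le_iff p q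

lemma iota_le_iff (k : ZZ) (u : OPZ) : iotaFun k ≤ u ↔
    ((zint k % 2 = 0 ∧ opFst u ≤ zint k ∧ zint k ≤ opSnd u) ∨
     (zint k % 2 ≠ 0 ∧ opFst u ≤ zint k + 1 ∧ zint k - 1 ≤ opSnd u)) := by
  unfold iotaFun
  split_ifs with h <;> rw [opz_le_iff] <;> simp only [opFst_mk, opSnd_mk] <;> omega

lemma mem_zseg_iff (a b : ℤ) (k : ZZ) : k ∈ zseg a b ↔ a ≤ zint k ∧ zint k ≤ b := Iff.rfl

lemma mem_Useg_iff (u : OPZ) : u ∈ Useg ↔ opFst u ≤ opSnd u := Iff.rfl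

lemma mem_Useg_mkOP {a b : ℤ} (h : a ≤ b) : mkOP a b ∈ Useg := by
  rw [mem_Useg_iff, opFst_mk, opSnd_mk]; exact h

lemma iota_le_of_mem_zseg {a b : ℤ} {k : ZZ} (hk : k ∈ zseg a b) :
    iotaFun k ≤ mkOP a b := by
  rw [mem_zseg_iff] at hk
  rw [iota_le_iff, opFst_mk, opSnd_mk]
  omega

lemma upper_fence_nonempty {a b : ℤ} (hab : a ≤ b) {q : ZZ} (hq : iotaFun q ≤ mkOP a b) :
    ∃ k : ZZ, k ∈ zseg a b ∧ q ≤ k := by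
  rw [iota_le_iff, opFst_mk, opSnd_mk] at hq
  refine ⟨(max a (min b (zint q)) : ℤ), ?_, ?_⟩
  · show a ≤ max a (min b (zint q)) ∧ max a (min b (zint q)) ≤ b
    omega
  · show zint q = max a (min b (zint q)) ∨ ((max a (min b (zint q)) = zint q + 1 ∨
      max a (min b (zint q)) = zint q - 1) ∧ max a (min b (zint q)) % 2 = 0)
    omega

lemma zint_inj {p q : ZZ} (h : zint p = zint q) : p = q := h

lemma upper_fence_conn {a b : ℤ} (hab : a ≤ b) {q : ZZ} (hq : iotaFun q ≤ mkOP a b) :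
    ConnectedIn (zseg a b ∩ {r | q ≤ r}) := by
  intro p hp p' hp'
  have hp1 := (mem_zseg_iff a b p).mp hp.1
  have hp2 := (zz_le_iff' q p).mp hp.2
  have hp'1 := (mem_zseg_iff a b p').mp hp'.1
  have hp'2 := (zz_le_iff' q p').mp hp'.2
  rw [iota_le_iff, opFst_mk, opSnd_mk] at hq
  by_cases hqq : q ∈ zseg a b
  · refine Relation.ReflTransGen.head ⟨hp, ⟨hqq, le_refl q⟩, Or.inr hp.2⟩
      (Relation.ReflTransGen.single ⟨⟨hqq, le_refl q⟩, hp', Or.inl hp'.2⟩)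
  · have hq3 : ¬ (a ≤ zint q ∧ zint q ≤ b) := fun h => hqq ((mem_zseg_iff a b q).mpr h)
    have : p = p' := zint_inj (by omega)
    rw [this]

/-- The inclusion of the segment `[a,b]` into the comma category `ι / (a,b)`. -/
noncomputable def Fseg (a b : ℤ) : ↥(zseg a b) ⥤ CostructuredArrow iotaF (mkOP a b) where
  obj k := CostructuredArrow.mk (homOfLE (iota_le_of_mem_zseg k.2) : iotaF.obj k.1 ⟶ mkOP a b)
  map {k k'} f := CostructuredArrow.homMk (homOfLE (leOfHom f : k.1 ≤ k'.1))
    (Subsingleton.elim _ _)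
  map_id := fun k => Subsingleton.elim _ _
  map_comp := fun f g => Subsingleton.elim _ _

lemma final_Fseg (a b : ℤ) (hab : a ≤ b) : (Fseg a b).Final := by
  constructor
  intro d
  have hd : iotaFun d.left ≤ mkOP a b := leOfHom d.hom
  apply isConnected_of_set (J := StructuredArrow d (Fseg a b))
    (zseg a b ∩ {r | d.left ≤ r})
    (upper_fence_conn hab hd)
    (fun j => j.right.1)
    (fun j => ⟨j.right.2, leOfHom j.hom.left⟩)
    (fun u hu => StructuredArrow.mk
      (Y := (⟨u, hu.1⟩ : ↥(zseg a b)))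
      (CostructuredArrow.homMk (homOfLE hu.2) (Subsingleton.elim _ _)))
  · intro j
    exact Or.inl ⟨StructuredArrow.homMk (homOfLE (le_refl j.right)) (Subsingleton.elim _ _)⟩
  · intro p hp q hq h
    rcases h with h | h
    · exact Or.inl ⟨StructuredArrow.homMk (homOfLE h) (Subsingleton.elim _ _)⟩
    · exact Or.inr ⟨StructuredArrow.homMk (homOfLE h) (Subsingleton.elim _ _)⟩
  · obtain ⟨k, hk1, hk2⟩ := upper_fence_nonempty hab hd
    exact ⟨StructuredArrow.mk (Y := (⟨k, hk1⟩ : ↥(zseg a b)))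
      (CostructuredArrow.homMk (homOfLE hk2) (Subsingleton.elim _ _))⟩

/-- The comparison isomorphism in the colimit (upper triangular) case. -/
noncomputable def case1Iso (K : Type) [Field K] (M : ZZ ⥤ ModuleCat.{0} K) (a b : ℤ)
    (hab : a ≤ b) :
    (blockExt K M).obj (mkOP a b) ≅ colimit (restrict K M (zseg a b)) :=
  letI N := kappaF ⋙ iotaF.lan.obj M
  letI x : OPZ := mkOP a b
  letI hx : x ∈ Useg := mem_Useg_mkOP hab
  letI s₀ : StructuredArrow x kappaF := StructuredArrow.mk (Y := (⟨x, hx⟩ : ↥Useg))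
    (homOfLE (le_refl x))
  haveI hfin : (Fseg a b).Final := final_Fseg a b hab
  letI init : IsInitial s₀ := IsInitial.ofUniqueHom
    (fun Y => StructuredArrow.homMk (homOfLE (leOfHom Y.hom)) (Subsingleton.elim _ _))
    (fun Y m => Subsingleton.elim _ _)
  (kappaF.ranObjObjIsoLimit N x) ≪≫
    (limit.isoLimitCone ⟨_, limitOfDiagramInitial init (StructuredArrow.proj x kappaF ⋙ N)⟩ :
      _ ≅ (iotaF.leftKanExtension M).obj x) ≪≫
    (iotaF.leftKanExtensionObjIsoColimit M x) ≪≫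
    (Functor.Final.colimitIso (Fseg a b) (CostructuredArrow.proj iotaF x ⋙ M) :
      colimit (Fseg a b ⋙ (CostructuredArrow.proj iotaF x ⋙ M)) ≅ _).symm

/-- The staircase between `lo` and `hi` in `ℤᵒᵈ × ℤ`. -/
def StSet (lo hi : ℤ) : Set OPZ :=
  {u | lo ≤ opFst u ∧ opSnd u ≤ hi ∧ opFst u ≤ opSnd u ∧ opSnd u ≤ opFst u + 1}

lemma mem_StSet_iff (lo hi : ℤ) (u : OPZ) :
    u ∈ StSet lo hi ↔ lo ≤ opFst u ∧ opSnd u ≤ hi ∧ opFst u ≤ opSnd u ∧ opSnd u ≤ opFst u + 1 :=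
  Iff.rfl

lemma st_reach (lo hi : ℤ) (hlohi : lo ≤ hi) :
    ∀ n : ℕ, ∀ u ∈ StSet lo hi, opFst u + opSnd u ≤ 2 * lo + n →
      Relation.ReflTransGen
        (fun a b => a ∈ StSet lo hi ∧ b ∈ StSet lo hi ∧ (a ≤ b ∨ b ≤ a)) u (mkOP lo lo) := by
  have hbase : mkOP lo lo ∈ StSet lo hi := by
    rw [mem_StSet_iff, opFst_mk, opSnd_mk]; omega
  intro n
  induction n with
  | zero =>
    intro u hu hsum
    rw [mem_StSet_iff] at hu
    have : u = mkOP lo lo := opz_ext u _ (by rw [opFst_mk]; omega) (by rw [opSnd_mk]; omega)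
    rw [this]
  | succ n ih =>
    intro u hu hsum
    have hu' := (mem_StSet_iff lo hi u).mp hu
    by_cases h0 : opFst u = lo ∧ opSnd u = lo
    · have : u = mkOP lo lo := opz_ext u _ (by rw [opFst_mk]; omega) (by rw [opSnd_mk]; omega)
      rw [this]
    · by_cases h1 : opFst u = opSnd u
      · set v : OPZ := mkOP (opFst u - 1) (opSnd u) with hv
        have hvmem : v ∈ StSet lo hi := by
          rw [mem_StSet_iff, hv, opFst_mk, opSnd_mk]; omega
        refine Relation.ReflTransGen.head ⟨hu, hvmem, Or.inl ?_⟩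
          (ih v hvmem (by rw [hv, opFst_mk, opSnd_mk]; omega))
        rw [opz_le_iff, hv, opFst_mk, opSnd_mk]; omega
      · set v : OPZ := mkOP (opFst u) (opFst u) with hv
        have hvmem : v ∈ StSet lo hi := by
          rw [mem_StSet_iff, hv, opFst_mk, opSnd_mk]; omega
        refine Relation.ReflTransGen.head ⟨hu, hvmem, Or.inr ?_⟩
          (ih v hvmem (by rw [hv, opFst_mk, opSnd_mk]; omega))
        rw [opz_le_iff, hv, opFst_mk, opSnd_mk]; omega

lemma st_conn (lo hi : ℤ) (hlohi : lo ≤ hi) : ConnectedIn (StSet lo hi) := by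
  have hsym : Symmetric
      (fun a b => a ∈ StSet lo hi ∧ b ∈ StSet lo hi ∧ (a ≤ b ∨ b ≤ a)) :=
    fun a b h => ⟨h.2.1, h.1, h.2.2.symm⟩
  intro p hp q hq
  refine Relation.ReflTransGen.trans
    (st_reach lo hi hlohi (opFst p + opSnd p - 2 * lo).toNat p hp (by omega)) ?_
  exact ((@Relation.ReflTransGen.stdSymm _ _ ⟨fun x y h => hsym h⟩).symm _ _)
    (st_reach lo hi hlohi (opFst q + opSnd q - 2 * lo).toNat q hq (by omega))

lemma conn_congr {α : Type} [PartialOrder α] {S S' : Set α} (h : S = S')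
    (hc : ConnectedIn S') : ConnectedIn S := by rw [h]; exact hc

/-- The staircase associated with the pair `b < a`. -/
def Tset (a b : ℤ) : Set OPZ :=
  {u | b ≤ opFst u ∧ opSnd u ≤ a ∧ opFst u ≤ opSnd u ∧ opSnd u ≤ opFst u + 1}

lemma mem_Tset_iff (a b : ℤ) (u : OPZ) :
    u ∈ Tset a b ↔ b ≤ opFst u ∧ opSnd u ≤ a ∧ opFst u ≤ opSnd u ∧ opSnd u ≤ opFst u + 1 :=
  Iff.rfl

/-- The sink (even) basepoint attached to a staircase element. -/
def phiInt (u : OPZ) : ℤ := if opFst u % 2 = 0 then opFst u else opSnd u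

lemma phiInt_eq (u : OPZ) :
    phiInt u = if opFst u % 2 = 0 then opFst u else opSnd u := rfl

/-- Reinterpret an integer as an element of the zigzag poset. -/
def zmk (n : ℤ) : ZZ := n

lemma zint_zmk (n : ℤ) : zint (zmk n) = n := rfl

lemma phi_mem_zseg {a b : ℤ} {u : OPZ} (hu : u ∈ Tset a b) :
    zmk (phiInt u) ∈ zseg b a := by
  rw [mem_Tset_iff] at hu
  rw [mem_zseg_iff]
  simp only [zint_zmk, phiInt_eq]
  split_ifs <;> omega

lemma phi_mono {a b : ℤ} {u v : OPZ} (hu : u ∈ Tset a b) (hv : v ∈ Tset a b) (h : u ≤ v) :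
    zmk (phiInt u) ≤ zmk (phiInt v) := by
  rw [mem_Tset_iff] at hu hv
  rw [opz_le_iff] at h
  rw [zz_le_iff']
  simp only [zint_zmk, phiInt_eq]
  split_ifs <;> omega

lemma iota_phi_le {a b : ℤ} {u : OPZ} (hu : u ∈ Tset a b) :
    iotaFun (zmk (phiInt u)) ≤ u := by
  rw [mem_Tset_iff] at hu
  rw [iota_le_iff]
  simp only [zint_zmk, phiInt_eq]
  split_ifs <;> omega

lemma phi_term {a b : ℤ} {u : OPZ} (hu : u ∈ Tset a b) {k : ZZ} (hk : iotaFun k ≤ u) :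
    k ≤ zmk (phiInt u) := by
  rw [mem_Tset_iff] at hu
  rw [iota_le_iff] at hk
  rw [zz_le_iff']
  simp only [zint_zmk, phiInt_eq]
  split_ifs <;> omega

lemma mem_Useg_of_Tset {a b : ℤ} {u : OPZ} (hu : u ∈ Tset a b) : u ∈ Useg := by
  rw [mem_Tset_iff] at hu; rw [mem_Useg_iff]; omega

lemma mkOP_le_of_Tset {a b : ℤ} {u : OPZ} (hu : u ∈ Tset a b) : mkOP a b ≤ u := by
  rw [mem_Tset_iff] at hu; rw [opz_le_iff, opFst_mk, opSnd_mk]; omega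

/-- The projection from the staircase to the zigzag segment `[b,a]`. -/
noncomputable def phiF (a b : ℤ) : ↥(Tset a b) ⥤ ↥(zseg b a) :=
  Monotone.functor (f := fun t => (⟨zmk (phiInt t.1), phi_mem_zseg t.2⟩ : ↥(zseg b a)))
    (fun t t' h => phi_mono t.2 t'.2 h)

/-- The inclusion of the staircase into the comma category `(a,b) / κ`. -/
noncomputable def G1F (a b : ℤ) : ↥(Tset a b) ⥤ StructuredArrow (mkOP a b) kappaF where
  obj t := StructuredArrow.mk (Y := (⟨t.1, mem_Useg_of_Tset t.2⟩ : ↥Useg))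
    (homOfLE (mkOP_le_of_Tset t.2))
  map {t t'} f := StructuredArrow.homMk (homOfLE (leOfHom f : t.1 ≤ t'.1))
    (Subsingleton.elim _ _)
  map_id := fun t => Subsingleton.elim _ _
  map_comp := fun f g => Subsingleton.elim _ _

lemma initial_G1F (a b : ℤ) (hba : b < a) : (G1F a b).Initial := by
  constructor
  intro d
  have hd : mkOP a b ≤ d.right.1 := leOfHom d.hom
  have hd2 : opFst d.right.1 ≤ opSnd d.right.1 := d.right.2
  rw [opz_le_iff, opFst_mk, opSnd_mk] at hd
  have hset : Tset a b ∩ {u | u ≤ d.right.1}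
      = StSet (max b (opFst d.right.1)) (min a (opSnd d.right.1)) := by
    ext u
    rw [Set.mem_inter_iff, mem_Tset_iff, mem_StSet_iff, Set.mem_setOf_eq, opz_le_iff]
    omega
  apply isConnected_of_set (J := CostructuredArrow (G1F a b) d)
    (Tset a b ∩ {u | u ≤ d.right.1})
    (conn_congr hset (st_conn _ _ (by omega)))
    (fun j => j.left.1)
    (fun j => ⟨j.left.2, leOfHom j.hom.right⟩)
    (fun u hu => CostructuredArrow.mk
      (StructuredArrow.homMk (homOfLE hu.2) (Subsingleton.elim _ _) :
        (G1F a b).obj ⟨u, hu.1⟩ ⟶ d))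
  · intro j
    exact Or.inl ⟨CostructuredArrow.homMk (homOfLE (le_refl j.left)) (Subsingleton.elim _ _)⟩
  · intro p hp q hq h
    rcases h with h | h
    · exact Or.inl ⟨CostructuredArrow.homMk (homOfLE h) (Subsingleton.elim _ _)⟩
    · exact Or.inr ⟨CostructuredArrow.homMk (homOfLE h) (Subsingleton.elim _ _)⟩
  · have hu0 : mkOP (max b (opFst d.right.1)) (max b (opFst d.right.1))
        ∈ Tset a b ∩ {u | u ≤ d.right.1} := by
      rw [Set.mem_inter_iff, mem_Tset_iff, Set.mem_setOf_eq, opz_le_iff]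
      simp only [opFst_mk, opSnd_mk]
      omega
    exact ⟨CostructuredArrow.mk
      (StructuredArrow.homMk (homOfLE hu0.2) (Subsingleton.elim _ _) :
        (G1F a b).obj ⟨_, hu0.1⟩ ⟶ d)⟩

lemma initial_phiF (a b : ℤ) (hba : b < a) : (phiF a b).Initial := by
  constructor
  intro d
  obtain ⟨hd1, hd2⟩ := (mem_zseg_iff b a d.1).mp d.2
  set dk := zint d.1 with hdk
  set S : Set OPZ := Tset a b ∩ {u | zmk (phiInt u) ≤ d.1} with hS
  have hmem : ∀ u : OPZ, u ∈ S ↔ (b ≤ opFst u ∧ opSnd u ≤ a ∧ opFst u ≤ opSnd u ∧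
      opSnd u ≤ opFst u + 1 ∧
      (phiInt u = dk ∨ ((dk = phiInt u + 1 ∨ dk = phiInt u - 1) ∧ dk % 2 = 0))) := by
    intro u
    rw [hS, Set.mem_inter_iff, mem_Tset_iff, Set.mem_setOf_eq, zz_le_iff', zint_zmk, ← hdk]
    tauto
  have hbase : mkOP dk dk ∈ S := by
    rw [hmem, opFst_mk, opSnd_mk, phiInt_eq, opFst_mk, opSnd_mk]
    split_ifs <;> omega
  have hreach : ∀ p ∈ S, Relation.ReflTransGen
      (fun u v => u ∈ S ∧ v ∈ S ∧ (u ≤ v ∨ v ≤ u)) p (mkOP dk dk) := by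
    intro p hp
    have hp' := (hmem p).mp hp
    have hpar : (phiInt p = opFst p ∧ opFst p % 2 = 0) ∨
        (phiInt p = opSnd p ∧ ¬ (opFst p % 2 = 0)) := by
      rw [phiInt_eq]
      split_ifs with h
      · exact Or.inl ⟨rfl, h⟩
      · exact Or.inr ⟨rfl, h⟩
    have hcase : (opFst p = dk ∧ opSnd p = dk) ∨ (opFst p = dk - 1 ∧ opSnd p = dk) ∨
        (opFst p = dk ∧ opSnd p = dk + 1) ∨
        (opFst p = dk - 1 ∧ opSnd p = dk - 1 ∧ dk % 2 = 0) ∨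
        (opFst p = dk + 1 ∧ opSnd p = dk + 1 ∧ dk % 2 = 0) := by omega
    rcases hcase with ⟨h1, h2⟩ | ⟨h1, h2⟩ | ⟨h1, h2⟩ | ⟨h1, h2, h3⟩ | ⟨h1, h2, h3⟩
    · have : p = mkOP dk dk := opz_ext _ _ (by rw [opFst_mk]; omega) (by rw [opSnd_mk]; omega)
      rw [this]
    · exact Relation.ReflTransGen.single ⟨hp, hbase, Or.inr (by
        rw [opz_le_iff]; simp only [opFst_mk, opSnd_mk]; omega)⟩
    · exact Relation.ReflTransGen.single ⟨hp, hbase, Or.inr (by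
        rw [opz_le_iff]; simp only [opFst_mk, opSnd_mk]; omega)⟩
    · have hmid : mkOP (dk - 1) dk ∈ S := by
        rw [hmem, opFst_mk, opSnd_mk, phiInt_eq, opFst_mk, opSnd_mk]
        split_ifs <;> omega
      refine Relation.ReflTransGen.head ⟨hp, hmid, Or.inl ?_⟩
        (Relation.ReflTransGen.single ⟨hmid, hbase, Or.inr ?_⟩) <;>
        · rw [opz_le_iff]; simp only [opFst_mk, opSnd_mk]; omega
    · have hmid : mkOP dk (dk + 1) ∈ S := by
        rw [hmem, opFst_mk, opSnd_mk, phiInt_eq, opFst_mk, opSnd_mk]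
        split_ifs <;> omega
      refine Relation.ReflTransGen.head ⟨hp, hmid, Or.inl ?_⟩
        (Relation.ReflTransGen.single ⟨hmid, hbase, Or.inr ?_⟩) <;>
        · rw [opz_le_iff]; simp only [opFst_mk, opSnd_mk]; omega
  have hconnS : ConnectedIn S := by
    have hsym : Symmetric (fun u v => u ∈ S ∧ v ∈ S ∧ (u ≤ v ∨ v ≤ u)) :=
      fun u v h => ⟨h.2.1, h.1, h.2.2.symm⟩
    intro p hp q hq
    exact Relation.ReflTransGen.trans (hreach p hp)
      (((@Relation.ReflTransGen.stdSymm _ _ ⟨fun x y h => hsym h⟩).symm _ _) (hreach q hq))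
  apply isConnected_of_set (J := CostructuredArrow (phiF a b) d) S hconnS
    (fun j => j.left.1)
    (fun j => ⟨j.left.2, leOfHom j.hom⟩)
    (fun u hu => CostructuredArrow.mk
      (homOfLE hu.2 : (phiF a b).obj ⟨u, hu.1⟩ ⟶ d))
  · intro j
    exact Or.inl ⟨CostructuredArrow.homMk (homOfLE (le_refl j.left)) (Subsingleton.elim _ _)⟩
  · intro p hp q hq h
    rcases h with h | h
    · exact Or.inl ⟨CostructuredArrow.homMk (homOfLE h) (Subsingleton.elim _ _)⟩
    · exact Or.inr ⟨CostructuredArrow.homMk (homOfLE h) (Subsingleton.elim _ _)⟩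
  · exact ⟨CostructuredArrow.mk (homOfLE hbase.2 : (phiF a b).obj ⟨_, hbase.1⟩ ⟶ d)⟩

/-- The component of the comparison map at a staircase element. -/
noncomputable def thetaApp (K : Type) [Field K] (M : ZZ ⥤ ModuleCat.{0} K) {a b : ℤ}
    (t : ↥(Tset a b)) :
    M.obj (zmk (phiInt t.1)) ⟶ (iotaF.lan.obj M).obj t.1 :=
  (iotaF.lanUnit.app M).app (zmk (phiInt t.1)) ≫
    (iotaF.lan.obj M).map (homOfLE (iota_phi_le t.2) : iotaF.obj (zmk (phiInt t.1)) ⟶ t.1)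

/-- The basepoint is terminal in the fiber over a staircase element. -/
noncomputable def phiTerminal {a b : ℤ} (t : ↥(Tset a b)) :
    IsTerminal (CostructuredArrow.mk
      (homOfLE (iota_phi_le t.2) : iotaF.obj (zmk (phiInt t.1)) ⟶ t.1)) :=
  IsTerminal.ofUniqueHom
    (fun g => CostructuredArrow.homMk (homOfLE (phi_term t.2 (leOfHom g.hom)))
      (Subsingleton.elim _ _))
    (fun g m => Subsingleton.elim _ _)

lemma thetaApp_isIso (K : Type) [Field K] (M : ZZ ⥤ ModuleCat.{0} K) {a b : ℤ}
    (t : ↥(Tset a b)) : IsIso (thetaApp K M t) := by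
  haveI : IsIso (colimit.ι (CostructuredArrow.proj iotaF t.1 ⋙ M)
      (CostructuredArrow.mk
        (homOfLE (iota_phi_le t.2) : iotaF.obj (zmk (phiInt t.1)) ⟶ t.1))) :=
    (colimit.isColimit _).isIso_ι_app_of_isTerminal _ (phiTerminal t)
  have heq : thetaApp K M t = colimit.ι (CostructuredArrow.proj iotaF t.1 ⋙ M)
      (CostructuredArrow.mk
        (homOfLE (iota_phi_le t.2) : iotaF.obj (zmk (phiInt t.1)) ⟶ t.1)) ≫
      (iotaF.leftKanExtensionObjIsoColimit M t.1).inv := by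
    refine (Iso.eq_comp_inv _).mpr ?_
    unfold thetaApp
    rw [Category.assoc]
    exact iotaF.leftKanExtensionUnit_leftKanExtension_map_leftKanExtensionObjIsoColimit_hom M
      t.1 (CostructuredArrow.mk (homOfLE (iota_phi_le t.2)))
  rw [heq]
  exact IsIso.comp_isIso' this (Iso.isIso_inv _)

/-- The comparison natural isomorphism over the staircase. -/
noncomputable def thetaIso (K : Type) [Field K] (M : ZZ ⥤ ModuleCat.{0} K) (a b : ℤ) :
    phiF a b ⋙ restrict K M (zseg b a) ≅
      G1F a b ⋙ StructuredArrow.proj (mkOP a b) kappaF ⋙ (kappaF ⋙ iotaF.lan.obj M) :=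
  haveI : ∀ t : ↥(Tset a b), IsIso (thetaApp K M t) := fun t => thetaApp_isIso K M t
  NatIso.ofComponents (fun t => @asIso _ _ _ _ (thetaApp K M t) (thetaApp_isIso K M t)) (fun {t t'} f => by
    have hmono : zmk (phiInt t.1) ≤ zmk (phiInt t'.1) := phi_mono t.2 t'.2 (leOfHom f)
    have h1 : (phiF a b ⋙ restrict K M (zseg b a)).map f = M.map (homOfLE hmono) :=
      congrArg M.map (Subsingleton.elim _ _)
    have h2 : (G1F a b ⋙ StructuredArrow.proj (mkOP a b) kappaF ⋙
          (kappaF ⋙ iotaF.lan.obj M)).map f =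
        (iotaF.lan.obj M).map (homOfLE (leOfHom f : t.1 ≤ t'.1)) :=
      congrArg (iotaF.lan.obj M).map (Subsingleton.elim _ _)
    rw [h1, h2]
    change M.map (homOfLE hmono) ≫ thetaApp K M t' =
      thetaApp K M t ≫ (iotaF.lan.obj M).map (homOfLE (leOfHom f : t.1 ≤ t'.1))
    unfold thetaApp
    have hnat := (iotaF.lanUnit.app M).naturality (homOfLE hmono)
    dsimp at hnat
    rw [← Category.assoc, hnat, Category.assoc, ← Functor.map_comp, Category.assoc,
      ← Functor.map_comp]
    congr 1)

/-- The comparison isomorphism in the limit (lower triangular) case. -/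
noncomputable def case2Iso (K : Type) [Field K] (M : ZZ ⥤ ModuleCat.{0} K) (a b : ℤ)
    (hba : b < a) :
    (blockExt K M).obj (mkOP a b) ≅ limit (restrict K M (zseg b a)) :=
  haveI h1 : (G1F a b).Initial := initial_G1F a b hba
  haveI h2 : (phiF a b).Initial := initial_phiF a b hba
  (kappaF.ranObjObjIsoLimit (kappaF ⋙ iotaF.lan.obj M) (mkOP a b)) ≪≫
    (Functor.Initial.limitIso (G1F a b)
      (StructuredArrow.proj (mkOP a b) kappaF ⋙ (kappaF ⋙ iotaF.lan.obj M))).symm ≪≫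
    (HasLimit.isoOfNatIso (thetaIso K M a b).symm) ≪≫
    (Functor.Initial.limitIso (phiF a b) (restrict K M (zseg b a)))

end BlockExtAux

/-- The block extension of a zigzag module satisfies
`E(M)(a,b) = colim M|_{[a,b]}` for `a ≤ b` and `E(M)(a,b) = lim M|_{[b,a]}` for `a > b`. -/
theorem blockExt_obj_eq (K : Type) [Field K] (M : ZZ ⥤ ModuleCat.{0} K) (a b : ℤ) :
    (a ≤ b → Nonempty ((blockExt K M).obj (mkOP a b)
        ≅ colimit (restrict K M (zseg a b)))) ∧
    (b < a → Nonempty ((blockExt K M).obj (mkOP a b)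
        ≅ limit (restrict K M (zseg b a)))) :=
  ⟨fun hab => ⟨case1Iso K M a b hab⟩, fun hba => ⟨case2Iso K M a b hba⟩⟩
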